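/- Let (Γ,μ) be a weighted graph satisfying (p₀) and the skewed parabolic mean value inequality (sPMV). Then (VC), (TC) and the mean value inequality (MV) hold. -/

import Mathlib

open scoped BigOperators Classical

/-- A weighted graph: symmetric nonnegative edge weights on a (countably infinite,
connected) vertex set; `x ∼ y` iff `0 < w x y`. -/
structure WeightedGraph (V : Type*) where
  w : V → V → ℝ
  symm : ∀ x y, w x y = w y x
  nonneg : ∀ x y, 0 ≤ w x y
  summable' : ∀ x, Summable (w x)
  mu_pos : ∀ x, 0 < ∑' y, w x y
  connected : ∀ x y : V, Relation.ReflTransGen (fun a b => 0 < w a b) x y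

namespace WeightedGraph

variable {V : Type*}

/-- The vertex measure `μ(x) = Σ_{y∼x} μ_{xy}`. -/
noncomputable def mu (G : WeightedGraph V) (x : V) : ℝ := ∑' y, G.w x y

/-- Measure of a set of vertices. -/
noncomputable def muSet (G : WeightedGraph V) (A : Set V) : ℝ := ∑' y : A, G.mu y

/-- One-step transition probability `P(x,y) = μ_{xy}/μ(x)`. -/
noncomputable def P (G : WeightedGraph V) (x y : V) : ℝ := G.w x y / G.mu x

/-- `n`-step transition probabilities. -/
noncomputable def Pn (G : WeightedGraph V) : ℕ → V → V → ℝ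
  | 0, x, y => if x = y then 1 else 0
  | n + 1, x, y => ∑' z, G.P x z * G.Pn n z y

/-- The heat kernel `p_n(x,y) = P_n(x,y)/μ(y)`. -/
noncomputable def hk (G : WeightedGraph V) (n : ℕ) (x y : V) : ℝ := G.Pn n x y / G.mu y

/-- There is a walk of length `n` from `x` to `y`. -/
def walkLen (G : WeightedGraph V) : ℕ → V → V → Prop
  | 0, x, y => x = y
  | n + 1, x, y => ∃ z, 0 < G.w x z ∧ G.walkLen n z y

/-- The (shortest path) graph distance. -/
noncomputable def dist (G : WeightedGraph V) (x y : V) : ℕ := sInf {n | G.walkLen n x y}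

/-- Open ball `B(x,R)`. -/
def ball (G : WeightedGraph V) (x : V) (R : ℕ) : Set V := {y | G.dist x y < R}

/-- Closed ball `B̄(x,R)`. -/
def cball (G : WeightedGraph V) (x : V) (R : ℕ) : Set V := {y | G.dist x y ≤ R}

/-- Volume of a ball: `V(x,R) = μ(B(x,R))`. -/
noncomputable def vol (G : WeightedGraph V) (x : V) (R : ℕ) : ℝ := G.muSet (G.ball x R)

/-- `survive B n x` is the probability that the walk started at `x` stays inside `B`
during its first `n` steps, i.e. `P(T_B > n | X_0 = x)`. -/
noncomputable def survive (G : WeightedGraph V) (B : Set V) : ℕ → V → ℝ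
  | 0, x => if x ∈ B then 1 else 0
  | n + 1, x => if x ∈ B then ∑' y, G.P x y * G.survive B n y else 0

/-- Mean exit time `E(x,R) = E(T_{B(x,R)} | X_0 = x) = Σ_{n≥0} P(T > n)`. -/
noncomputable def meanExit (G : WeightedGraph V) (x : V) (R : ℕ) : ℝ :=
  ∑' n, G.survive (G.ball x R) n x

/-- Generalized inverse `e(x,n) = min {R ∈ ℕ : E(x,R) ≥ n}` of the mean exit time. -/
noncomputable def einv (G : WeightedGraph V) (x : V) (n : ℕ) : ℕ :=
  sInf {R : ℕ | (n : ℝ) ≤ G.meanExit x R}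

/-- Condition `(p₀)`. -/
def condP0 (G : WeightedGraph V) : Prop :=
  ∃ p₀ > (0 : ℝ), ∀ x y : V, 0 < G.w x y → p₀ ≤ G.w x y / G.mu x

/-- Volume comparison principle `(VC)`. -/
def condVC (G : WeightedGraph V) : Prop :=
  ∃ C > (1 : ℝ), ∀ (x : V) (R : ℕ), 0 < R → ∀ y ∈ G.ball x R,
    G.vol x (2 * R) ≤ C * G.vol y R

/-- Volume doubling `(VD)`. -/
def condVD (G : WeightedGraph V) : Prop :=
  ∃ D > (0 : ℝ), ∀ (x : V) (R : ℕ), 0 < R → G.vol x (2 * R) ≤ D * G.vol x R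

/-- Time comparison principle `(TC)`. -/
def condTC (G : WeightedGraph V) : Prop :=
  ∃ C > (1 : ℝ), ∀ (x : V) (R : ℕ), 0 < R → ∀ y ∈ G.ball x R,
    G.meanExit x (2 * R) ≤ C * G.meanExit y R

/-- Time doubling `(TD)`. -/
def condTD (G : WeightedGraph V) : Prop :=
  ∃ D > (0 : ℝ), ∀ (x : V) (R : ℕ), 0 < R → G.meanExit x (2 * R) ≤ D * G.meanExit x R

/-- Uniformity of the mean exit time `(E)`. -/
def condE (G : WeightedGraph V) : Prop :=
  ∃ C > (1 : ℝ), ∀ (x y : V) (R : ℕ), 0 < R → G.meanExit x R ≤ C * G.meanExit y R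

/-- `u` is harmonic on `B`: `Pu = u` on `B`. -/
def IsHarmonicOn (G : WeightedGraph V) (u : V → ℝ) (B : Set V) : Prop :=
  ∀ z ∈ B, (∑' y, G.P z y * u y) = u z

/-- Mean value inequality `(MV)`. -/
def condMV (G : WeightedGraph V) : Prop :=
  ∃ C > (0 : ℝ), ∀ (x : V) (R : ℕ), 0 < R → ∀ u : V → ℝ,
    (∀ y ∈ G.cball x R, 0 ≤ u y) → G.IsHarmonicOn u (G.ball x R) →
    u x ≤ C / G.vol x R * ∑' y : G.ball x R, u y * G.mu y

/-- Elliptic Harnack inequality `(H)`. -/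
def condH (G : WeightedGraph V) : Prop :=
  ∃ C > (0 : ℝ), ∀ (x : V) (R : ℕ), 0 < R → ∀ u : V → ℝ,
    (∀ y ∈ G.cball x (2 * R), 0 ≤ u y) → G.IsHarmonicOn u (G.ball x (2 * R)) →
    ∀ z ∈ G.ball x R, ∀ v ∈ G.ball x R, u z ≤ C * u v

/-- Skewed parabolic mean value inequality `(sPMV)`. -/
def condSPMV (G : WeightedGraph V) : Prop :=
  ∃ c₁ c₂ C : ℝ, 0 < c₁ ∧ c₁ < c₂ ∧ c₂ ≤ 1 ∧ 1 ≤ C ∧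
    ∀ (x : V) (R : ℕ), 0 < R → ∀ y ∈ G.ball x R, ∀ u : ℕ → V → ℝ,
      (∀ i ≤ ⌊c₂ * G.meanExit x R⌋₊, ∀ z ∈ G.ball x R, 0 ≤ u i z) →
      (∀ i : ℕ, i + 1 ≤ ⌊c₂ * G.meanExit x R⌋₊ → ∀ z ∈ G.ball x R,
        u (i + 1) z = ∑' v, G.P z v * u i v) →
      u ⌊c₂ * G.meanExit x R⌋₊ x ≤
        C / (G.vol y (2 * R) * G.meanExit y (2 * R)) *
          ∑ i ∈ Finset.Icc ⌈c₁ * G.meanExit x R⌉₊ ⌊c₂ * G.meanExit x R⌋₊,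
            ∑' z : G.ball x R, u i z * G.mu z

/-- The local diagonal upper estimate `P_n(x,x) ≤ C μ(x) / V(x,e(x,n))`. -/
def condLDUE (G : WeightedGraph V) : Prop :=
  ∃ C > (0 : ℝ), ∀ (x : V) (n : ℕ), 1 ≤ n →
    G.Pn n x x ≤ C * G.mu x / G.vol x (G.einv x n)

/-- The local kernel function `k_y(n,R)`: the maximal integer `1 ≤ k ≤ n` with
`n/k ≤ q E(y, ⌊R/k⌋)`, and `0` if there is no such `k`. -/
noncomputable def kker (G : WeightedGraph V) (q : ℝ) (y : V) (n R : ℕ) : ℕ :=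
  sSup {k : ℕ | 1 ≤ k ∧ k ≤ n ∧ (n : ℝ) / k ≤ q * G.meanExit y (R / k)}

/-- `k_C(x,n,R) = min_{z ∈ B(x,e(x,n))} k_z(Cn, R/C)`. -/
noncomputable def kC (G : WeightedGraph V) (q : ℝ) (Cc : ℕ) (x : V) (n R : ℕ) : ℕ :=
  sInf {m : ℕ | ∃ z ∈ G.ball x (G.einv x n), m = G.kker q z (Cc * n) (R / Cc)}

/-- `κ_C(n,x,y)`. -/
noncomputable def kappaC (G : WeightedGraph V) (q : ℝ) (Cc : ℕ) (n : ℕ) (x y : V) : ℕ :=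
  if 3 * (G.einv x n + G.einv y n) < G.dist x y then
    max (G.kC q Cc x n (G.dist x y)) (G.kC q Cc y n (G.dist x y))
  else 0

/-- The local upper estimate (LUE). -/
def condLUE (G : WeightedGraph V) : Prop :=
  ∃ q > (0 : ℝ), ∃ C > (0 : ℝ), ∃ c > (0 : ℝ), ∀ (x y : V) (n : ℕ), 1 ≤ n →
    G.hk n x y ≤
      C / Real.sqrt (G.vol x (G.einv x n) * G.vol y (G.einv y n)) *
        Real.exp (-c * (G.kappaC q 3 n x y : ℝ))

/-- `A_{x,y} = B(x,d(x,y)) ∪ B(y,d(x,y))`. -/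
def Axy (G : WeightedGraph V) (x y : V) : Set V :=
  G.ball x (G.dist x y) ∪ G.ball y (G.dist x y)

/-- `κ(n,x,y) = min_{z ∈ A_{x,y}} k_z(3n, d(x,y)/3)` if `d(x,y) > 3[e(x,n)+e(y,n)]`,
and `0` otherwise. -/
noncomputable def kappa (G : WeightedGraph V) (q : ℝ) (n : ℕ) (x y : V) : ℕ :=
  if 3 * (G.einv x n + G.einv y n) < G.dist x y then
    sInf {m : ℕ | ∃ z ∈ G.Axy x y, m = G.kker q z (3 * n) (G.dist x y / 3)}
  else 0

/-- `l(n,x,y) = max_{z ∈ A_{x,y}} k_z(n, d(x,y))`. -/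
noncomputable def lfun (G : WeightedGraph V) (q : ℝ) (n : ℕ) (x y : V) : ℕ :=
  sSup {m : ℕ | ∃ z ∈ G.Axy x y, m = G.kker q z n (G.dist x y)}

/-- Inhomogeneity of the mean exit time: `δ(n,A) = log max_{z,v∈A} e(z,n)/e(v,n)`. -/
noncomputable def deltaIn (G : WeightedGraph V) (n : ℕ) (A : Set V) : ℝ :=
  Real.log (sSup {r : ℝ | ∃ z ∈ A, ∃ v ∈ A, r = (G.einv z n : ℝ) / (G.einv v n)})

/-- The lower sub-Gaussian kernel `ν(n,x,y) = l(n,x,y)[1 + δ(n,A_{x,y})]`. -/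
noncomputable def nu (G : WeightedGraph V) (q : ℝ) (n : ℕ) (x y : V) : ℝ :=
  (G.lfun q n x y : ℝ) * (1 + G.deltaIn n (G.Axy x y))

/-- `F` is a space-time scale function satisfying `(ED_F)`. -/
def EDF (F : ℕ → ℝ) : Prop :=
  StrictMono F ∧ (∀ R, 0 < F R) ∧
    ∃ D > (0 : ℝ), ∃ β > (1 : ℝ), ∃ c > (0 : ℝ),
      (∀ R, F (2 * R) ≤ D * F R) ∧
      ∀ r R : ℕ, 1 ≤ r → r ≤ R → c * ((R : ℝ) / r) ^ β ≤ F R / F r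

/-- Generalized inverse `f = F⁻¹`. -/
noncomputable def finv (F : ℕ → ℝ) (n : ℕ) : ℕ := sInf {R : ℕ | (n : ℝ) ≤ F R}

/-- The kernel `k(n,R)` built from `F`: the maximal integer `1 ≤ k ≤ n` with
`n/k ≤ q F(⌊R/k⌋)`, and `0` if there is no such `k`. -/
noncomputable def kF (q : ℝ) (F : ℕ → ℝ) (n R : ℕ) : ℕ :=
  sSup {k : ℕ | 1 ≤ k ∧ k ≤ n ∧ (n : ℝ) / k ≤ q * F (R / k)}

/-- Sub-Gaussian upper estimate `(UE_F)`. -/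
def condUEF (G : WeightedGraph V) (F : ℕ → ℝ) : Prop :=
  ∃ q > (0 : ℝ), ∃ C > (0 : ℝ), ∃ c > (0 : ℝ), ∀ (x y : V) (n : ℕ), 1 ≤ n →
    G.Pn n x y ≤
      C * G.mu y / G.vol x (finv F n) * Real.exp (-c * (kF q F n (G.dist x y) : ℝ))

/-- Sub-Gaussian lower estimate `(LE_F)`. -/
def condLEF (G : WeightedGraph V) (F : ℕ → ℝ) : Prop :=
  ∃ q > (0 : ℝ), ∃ c > (0 : ℝ), ∃ C > (0 : ℝ), ∀ (x y : V) (n : ℕ), 1 ≤ n →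
    c * G.mu y / G.vol x (finv F n) * Real.exp (-C * (kF q F n (G.dist x y) : ℝ)) ≤
      G.Pn n x y + G.Pn (n + 1) x y

/-- `F`-parabolic Harnack inequality `(PH_F)`. -/
def condPHF (G : WeightedGraph V) (F : ℕ → ℝ) : Prop :=
  ∃ CH > (0 : ℝ), ∀ (x : V) (R k : ℕ), 0 < R → ∀ u : ℕ → V → ℝ,
    (∀ i : ℕ, k ≤ i → (i : ℝ) ≤ k + F (4 * R) → ∀ z ∈ G.ball x (2 * R), 0 ≤ u i z) →
    (∀ i : ℕ, k ≤ i → ((i : ℝ) + 1) ≤ k + F (4 * R) → ∀ z ∈ G.ball x (2 * R),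
      u (i + 1) z = ∑' v, G.P z v * u i v) →
    ∀ nm np : ℕ, ∀ xm ∈ G.ball x R, ∀ xp ∈ G.ball x R,
      (k : ℝ) + F R ≤ nm → (nm : ℝ) ≤ k + F (2 * R) →
      (k : ℝ) + F (3 * R) ≤ np → (np : ℝ) ≤ k + F (4 * R) →
      (G.dist xm xp : ℝ) ≤ (np : ℝ) - nm →
      u nm xm ≤ CH * (u np xp + u (np + 1) xp)

end WeightedGraph

/-!
Harmonic functions, in particular constants, are time-independent solutions of the heat
equation, and the time window `[c₁E, c₂E]` of (sPMV) contains at most `E + 1 ≤ 2E` integers.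
Testing (sPMV) against `1` therefore gives `V(y,2R) E(y,2R) ≤ A V(x,R) E(x,R)` for
`y ∈ B(x,R)`; with `y = x` and monotonicity in `R` this yields volume and time doubling, and
(VC), (TC) follow by comparing balls. For a nonnegative harmonic `u` and `y = x`, (sPMV) bounds
`u(x)` by `2C E(x,2R) / (V(x,2R) E(x,2R)) Σ uμ ≤ 2C / V(x,R) Σ uμ`, which is (MV).
-/

namespace WeightedGraph

variable {V : Type*} (G : WeightedGraph V)

lemma walkLen_add {m n : ℕ} {a b c : V} (hab : G.walkLen m a b) (hbc : G.walkLen n b c) :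
    G.walkLen (m + n) a c := by
  induction m generalizing a with
  | zero => cases hab; simpa using hbc
  | succ m ih =>
    obtain ⟨z, haz, hzb⟩ := hab
    rw [Nat.add_right_comm]
    exact ⟨z, haz, ih hzb⟩

lemma walkLen_one {a b : V} (h : 0 < G.w a b) : G.walkLen 1 a b := ⟨b, h, rfl⟩

lemma walkLen_symm {n : ℕ} {a b : V} (h : G.walkLen n a b) : G.walkLen n b a := by
  induction n generalizing a with
  | zero => exact h.symm
  | succ n ih =>
    obtain ⟨z, haz, hzb⟩ := h
    exact G.walkLen_add (ih hzb) (G.walkLen_one (by rwa [G.symm]))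

lemma exists_walkLen (x y : V) : ∃ n, G.walkLen n x y := by
  induction G.connected x y with
  | refl => exact ⟨0, rfl⟩
  | tail _ hbc ih =>
    obtain ⟨n, hn⟩ := ih
    exact ⟨n + 1, G.walkLen_add hn (G.walkLen_one hbc)⟩

lemma walkLen_dist (x y : V) : G.walkLen (G.dist x y) x y :=
  Nat.sInf_mem (G.exists_walkLen x y)

lemma dist_le_of_walkLen {n : ℕ} {x y : V} (h : G.walkLen n x y) : G.dist x y ≤ n :=
  Nat.sInf_le h

lemma dist_self (x : V) : G.dist x x = 0 :=
  Nat.le_zero.mp (G.dist_le_of_walkLen (rfl : G.walkLen 0 x x))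

lemma dist_comm (x y : V) : G.dist x y = G.dist y x :=
  le_antisymm (G.dist_le_of_walkLen (G.walkLen_symm (G.walkLen_dist y x)))
    (G.dist_le_of_walkLen (G.walkLen_symm (G.walkLen_dist x y)))

lemma dist_triangle (x y z : V) : G.dist x z ≤ G.dist x y + G.dist y z :=
  G.dist_le_of_walkLen (G.walkLen_add (G.walkLen_dist x y) (G.walkLen_dist y z))

lemma mem_ball_self {x : V} {R : ℕ} (hR : 0 < R) : x ∈ G.ball x R := by
  simpa [ball, G.dist_self x] using hR

lemma mem_ball_comm {x y : V} {R : ℕ} : y ∈ G.ball x R ↔ x ∈ G.ball y R := by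
  simp only [ball, Set.mem_ofPred_eq, G.dist_comm x y]

lemma ball_subset_ball {x y : V} {R S : ℕ} (h : G.dist y x + R ≤ S) :
    G.ball x R ⊆ G.ball y S := fun z hz =>
  lt_of_le_of_lt (G.dist_triangle y x z) (by simp only [ball, Set.mem_ofPred_eq] at hz; omega)

lemma ball_subset_cball {x : V} {R : ℕ} : G.ball x R ⊆ G.cball x R := fun _ hz =>
  le_of_lt (α := ℕ) hz

lemma ball_mono (x : V) {R S : ℕ} (h : R ≤ S) : G.ball x R ⊆ G.ball x S :=
  G.ball_subset_ball (by rw [G.dist_self]; omega)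

lemma mu_nonneg (x : V) : 0 ≤ G.mu x := tsum_nonneg (G.nonneg x)

lemma P_nonneg (x y : V) : 0 ≤ G.P x y := div_nonneg (G.nonneg x y) (G.mu_nonneg x)

lemma summable_P (x : V) : Summable (G.P x) := (G.summable' x).div_const _

lemma tsum_P (x : V) : ∑' y, G.P x y = 1 := by
  simp only [P]
  rw [tsum_div_const]
  exact div_self (G.mu_pos x).ne'

lemma isHarmonicOn_const (c : ℝ) (B : Set V) : G.IsHarmonicOn (fun _ => c) B := fun z _ => by
  rw [tsum_mul_right, G.tsum_P, one_mul]

lemma summable_P_mul {x : V} {f : V → ℝ} (h0 : ∀ y, 0 ≤ f y) (h1 : ∀ y, f y ≤ 1) :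
    Summable (fun y => G.P x y * f y) :=
  (G.summable_P x).of_nonneg_of_le (fun y => mul_nonneg (G.P_nonneg x y) (h0 y))
    (fun y => mul_le_of_le_one_right (G.P_nonneg x y) (h1 y))

lemma muSet_nonneg (A : Set V) : 0 ≤ G.muSet A := tsum_nonneg fun y => G.mu_nonneg y

lemma vol_nonneg (x : V) (R : ℕ) : 0 ≤ G.vol x R := G.muSet_nonneg _

lemma summable_of_muSet_ne_zero {A : Set V} (h : G.muSet A ≠ 0) :
    Summable (fun y : A => G.mu y) := by
  by_contra hs
  exact h (tsum_eq_zero_of_not_summable hs)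

lemma summable_mu_of_subset {A B : Set V} (hAB : A ⊆ B) (hB : Summable (fun y : B => G.mu y)) :
    Summable (fun y : A => G.mu y) :=
  hB.comp_injective (Set.inclusion_injective hAB)

lemma muSet_mono {A B : Set V} (hAB : A ⊆ B) (hB : Summable (fun y : B => G.mu y)) :
    G.muSet A ≤ G.muSet B :=
  (G.summable_mu_of_subset hAB hB).tsum_le_tsum_of_inj _ (Set.inclusion_injective hAB)
    (fun y _ => G.mu_nonneg y) (fun _ => le_rfl) hB

lemma muSet_pos {A : Set V} (hA : Summable (fun y : A => G.mu y)) {x : V} (hx : x ∈ A) :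
    0 < G.muSet A :=
  hA.tsum_pos (fun y => G.mu_nonneg y) ⟨x, hx⟩ (G.mu_pos x)

section survive

variable (B : Set V)

lemma survive_nonneg (n : ℕ) (x : V) : 0 ≤ G.survive B n x := by
  induction n generalizing x with
  | zero => unfold survive; split_ifs <;> norm_num
  | succ n ih =>
    unfold survive
    split_ifs
    exacts [tsum_nonneg fun y => mul_nonneg (G.P_nonneg x y) (ih y), le_rfl]

lemma survive_le_one (n : ℕ) (x : V) : G.survive B n x ≤ 1 := by
  induction n generalizing x with
  | zero => unfold survive; split_ifs <;> norm_num
  | succ n ih =>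
    unfold survive
    split_ifs
    · calc ∑' y, G.P x y * G.survive B n y ≤ ∑' y, G.P x y :=
            (G.summable_P_mul (G.survive_nonneg B n) ih).tsum_le_tsum
              (fun y => mul_le_of_le_one_right (G.P_nonneg x y) (ih y)) (G.summable_P x)
        _ = 1 := G.tsum_P x
    · exact zero_le_one

lemma survive_mono_set {B' : Set V} (hBB' : B ⊆ B') (n : ℕ) (x : V) :
    G.survive B n x ≤ G.survive B' n x := by
  induction n generalizing x with
  | zero =>
    unfold survive
    split_ifs with hB hB' <;> first | exact absurd (hBB' hB) hB' | norm_num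
  | succ n ih =>
    unfold survive
    split_ifs with hB hB'
    · exact (G.summable_P_mul (G.survive_nonneg B n) (G.survive_le_one B n)).tsum_le_tsum
        (fun y => mul_le_mul_of_nonneg_left (ih y) (G.P_nonneg x y))
        (G.summable_P_mul (G.survive_nonneg B' n) (G.survive_le_one B' n))
    · exact absurd (hBB' hB) hB'
    · exact tsum_nonneg fun y => mul_nonneg (G.P_nonneg x y) (G.survive_nonneg B' n y)
    · exact le_rfl

end survive

lemma meanExit_nonneg (x : V) (R : ℕ) : 0 ≤ G.meanExit x R :=
  tsum_nonneg fun n => G.survive_nonneg _ n x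

lemma summable_survive_of_meanExit_ne_zero {x : V} {R : ℕ} (h : G.meanExit x R ≠ 0) :
    Summable (fun n => G.survive (G.ball x R) n x) := by
  by_contra hs
  exact h (tsum_eq_zero_of_not_summable hs)

lemma summable_survive_of_le {x : V} {R S : ℕ} (hRS : R ≤ S)
    (hS : Summable (fun n => G.survive (G.ball x S) n x)) :
    Summable (fun n => G.survive (G.ball x R) n x) :=
  hS.of_nonneg_of_le (fun n => G.survive_nonneg _ n x)
    (fun n => G.survive_mono_set _ (G.ball_mono x hRS) n x)

lemma meanExit_mono {x : V} {R S : ℕ} (hRS : R ≤ S)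
    (hS : Summable (fun n => G.survive (G.ball x S) n x)) :
    G.meanExit x R ≤ G.meanExit x S :=
  (G.summable_survive_of_le hRS hS).tsum_le_tsum
    (fun n => G.survive_mono_set _ (G.ball_mono x hRS) n x) hS

lemma one_le_meanExit {x : V} {R : ℕ} (hR : 0 < R)
    (hsum : Summable (fun n => G.survive (G.ball x R) n x)) : 1 ≤ G.meanExit x R := by
  have h0 : G.survive (G.ball x R) 0 x = 1 := if_pos (G.mem_ball_self hR)
  exact h0 ▸ hsum.le_tsum 0 fun n _ => G.survive_nonneg _ n x

lemma condVC_of_condVD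
    (hsum : ∀ (y : V) (R : ℕ), 0 < R → Summable (fun z : G.ball y R => G.mu z))
    (hVD : G.condVD) : G.condVC := by
  obtain ⟨D, hD, hVD⟩ := hVD
  refine ⟨D * D + 1, lt_add_of_pos_left 1 (mul_pos hD hD), fun x R hR y hy => ?_⟩
  have hyx : G.dist y x < R := G.mem_ball_comm.mp hy
  calc G.vol x (2 * R) ≤ G.vol y (2 * (2 * R)) :=
        G.muSet_mono (G.ball_subset_ball (by omega)) (hsum y _ (by omega))
    _ ≤ D * G.vol y (2 * R) := hVD y (2 * R) (by omega)
    _ ≤ D * (D * G.vol y R) := by gcongr; exact hVD y R hR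
    _ ≤ (D * D + 1) * G.vol y R := by nlinarith [G.vol_nonneg y R]

lemma card_Icc_ceil_floor_le {a c E : ℝ} (hc : c ≤ 1) (hE : 0 ≤ E) :
    ((Finset.Icc ⌈a⌉₊ ⌊c * E⌋₊).card : ℝ) ≤ E + 1 := by
  have hfloor : (⌊c * E⌋₊ : ℝ) ≤ E :=
    (Nat.cast_le.mpr (Nat.floor_le_floor (mul_le_of_le_one_left hE hc))).trans (Nat.floor_le hE)
  have hcard : (Finset.Icc ⌈a⌉₊ ⌊c * E⌋₊).card ≤ ⌊c * E⌋₊ + 1 := by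
    rw [Nat.card_Icc]; omega
  calc ((Finset.Icc ⌈a⌉₊ ⌊c * E⌋₊).card : ℝ) ≤ ⌊c * E⌋₊ + 1 := mod_cast hcard
    _ ≤ E + 1 := by linarith

namespace condSPMV

variable {G}

lemma exists_le_of_isHarmonicOn (h : G.condSPMV) :
    ∃ C > 0, ∀ (x : V) (R : ℕ), 0 < R → ∀ y ∈ G.ball x R, ∀ u : V → ℝ,
      (∀ z ∈ G.ball x R, 0 ≤ u z) → G.IsHarmonicOn u (G.ball x R) →
      u x ≤ C * (G.meanExit x R + 1) / (G.vol y (2 * R) * G.meanExit y (2 * R)) *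
        ∑' z : G.ball x R, u z * G.mu z := by
  obtain ⟨c₁, c₂, C, -, -, hc₂, hC, hS⟩ := h
  refine ⟨C, by linarith, fun x R hR y hy u hu hharm => ?_⟩
  have hle := hS x R hR y hy (fun _ => u) (fun _ _ => hu) (fun _ _ z hz => (hharm z hz).symm)
  rw [Finset.sum_const, nsmul_eq_mul] at hle
  have hsum : 0 ≤ ∑' z : G.ball x R, u z * G.mu z :=
    tsum_nonneg fun z => mul_nonneg (hu z z.2) (G.mu_nonneg z)
  have hcoef : 0 ≤ C / (G.vol y (2 * R) * G.meanExit y (2 * R)) :=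
    div_nonneg (by linarith) (mul_nonneg (G.vol_nonneg _ _) (G.meanExit_nonneg _ _))
  have hcard := card_Icc_ceil_floor_le (a := c₁ * G.meanExit x R) hc₂ (G.meanExit_nonneg x R)
  calc u x ≤ _ := hle
    _ ≤ C / (G.vol y (2 * R) * G.meanExit y (2 * R)) *
          ((G.meanExit x R + 1) * ∑' z : G.ball x R, u z * G.mu z) := by gcongr
    _ = _ := by ring

/-- Test (sPMV) against the constant solution `1`: if `V(y,2R) E(y,2R)` were `0` (e.g. the junk
value of a divergent `tsum`), its right-hand side would vanish. -/
lemma vol_mul_meanExit_pos (h : G.condSPMV) {y : V} {R : ℕ} (hR : 0 < R) :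
    0 < G.vol y (2 * R) * G.meanExit y (2 * R) := by
  obtain ⟨C, -, hmv⟩ := h.exists_le_of_isHarmonicOn
  have h1 := hmv y R hR y (G.mem_ball_self hR) (fun _ => 1) (fun _ _ => zero_le_one)
    (G.isHarmonicOn_const 1 _)
  refine (mul_nonneg (G.vol_nonneg _ _) (G.meanExit_nonneg _ _)).lt_of_ne fun h0 => ?_
  rw [← h0, div_zero, zero_mul] at h1
  exact absurd h1 (by norm_num)

lemma summable_mu_ball (h : G.condSPMV) (y : V) {R : ℕ} (hR : 0 < R) :
    Summable (fun z : G.ball y R => G.mu z) :=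
  G.summable_mu_of_subset (G.ball_mono y (by omega : R ≤ 2 * R))
    (G.summable_of_muSet_ne_zero (left_ne_zero_of_mul (h.vol_mul_meanExit_pos hR).ne'))

lemma summable_survive_ball (h : G.condSPMV) (y : V) {R : ℕ} (hR : 0 < R) :
    Summable (fun n => G.survive (G.ball y R) n y) :=
  G.summable_survive_of_le (by omega : R ≤ 2 * R)
    (G.summable_survive_of_meanExit_ne_zero
      (right_ne_zero_of_mul (h.vol_mul_meanExit_pos hR).ne'))

lemma vol_pos (h : G.condSPMV) (y : V) {R : ℕ} (hR : 0 < R) : 0 < G.vol y R :=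
  G.muSet_pos (h.summable_mu_ball y hR) (G.mem_ball_self hR)

lemma one_le_meanExit (h : G.condSPMV) (y : V) {R : ℕ} (hR : 0 < R) : 1 ≤ G.meanExit y R :=
  G.one_le_meanExit hR (h.summable_survive_ball y hR)

lemma meanExit_pos (h : G.condSPMV) (y : V) {R : ℕ} (hR : 0 < R) : 0 < G.meanExit y R :=
  one_pos.trans_le (h.one_le_meanExit y hR)

lemma vol_le_two_mul (h : G.condSPMV) (y : V) (R : ℕ) : G.vol y R ≤ G.vol y (2 * R) := by
  rcases R.eq_zero_or_pos with rfl | hR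
  · exact le_rfl
  · exact G.muSet_mono (G.ball_mono y (by omega)) (h.summable_mu_ball y (by omega))

lemma meanExit_le_two_mul (h : G.condSPMV) (y : V) (R : ℕ) :
    G.meanExit y R ≤ G.meanExit y (2 * R) := by
  rcases R.eq_zero_or_pos with rfl | hR
  · exact le_rfl
  · exact G.meanExit_mono (by omega) (h.summable_survive_ball y (by omega))

lemma exists_vol_mul_meanExit_le (h : G.condSPMV) :
    ∃ A > 0, ∀ (x : V) (R : ℕ), 0 < R → ∀ y ∈ G.ball x R,
      G.vol y (2 * R) * G.meanExit y (2 * R) ≤ A * (G.vol x R * G.meanExit x R) := by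
  obtain ⟨C, hC, hmv⟩ := h.exists_le_of_isHarmonicOn
  refine ⟨2 * C, by linarith, fun x R hR y hy => ?_⟩
  have h1 := hmv x R hR y hy (fun _ => 1) (fun _ _ => zero_le_one) (G.isHarmonicOn_const 1 _)
  simp only [one_mul] at h1
  rw [div_mul_eq_mul_div, le_div_iff₀ (h.vol_mul_meanExit_pos hR), one_mul] at h1
  have hE := h.one_le_meanExit x hR
  calc G.vol y (2 * R) * G.meanExit y (2 * R) ≤ C * (G.meanExit x R + 1) * G.vol x R := h1
    _ ≤ C * (G.meanExit x R + G.meanExit x R) * G.vol x R := by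
        gcongr; exact (h.vol_pos x hR).le
    _ = 2 * C * (G.vol x R * G.meanExit x R) := by ring

lemma condVD (h : G.condSPMV) : G.condVD := by
  obtain ⟨A, hA, hmaster⟩ := h.exists_vol_mul_meanExit_le
  refine ⟨A, hA, fun x R hR =>
    le_of_mul_le_mul_right ?_ (h.meanExit_pos x (R := 2 * R) (by omega))⟩
  calc G.vol x (2 * R) * G.meanExit x (2 * R) ≤ A * (G.vol x R * G.meanExit x R) :=
        hmaster x R hR x (G.mem_ball_self hR)
    _ ≤ A * (G.vol x R * G.meanExit x (2 * R)) := by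
        gcongr
        exacts [G.vol_nonneg x R, h.meanExit_le_two_mul x R]
    _ = A * G.vol x R * G.meanExit x (2 * R) := by ring

lemma condTD (h : G.condSPMV) : G.condTD := by
  obtain ⟨A, hA, hmaster⟩ := h.exists_vol_mul_meanExit_le
  refine ⟨A, hA, fun x R hR => le_of_mul_le_mul_left ?_ (h.vol_pos x (R := 2 * R) (by omega))⟩
  calc G.vol x (2 * R) * G.meanExit x (2 * R) ≤ A * (G.vol x R * G.meanExit x R) :=
        hmaster x R hR x (G.mem_ball_self hR)
    _ ≤ A * (G.vol x (2 * R) * G.meanExit x R) := by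
        gcongr
        exacts [G.meanExit_nonneg x R, h.vol_le_two_mul x R]
    _ = G.vol x (2 * R) * (A * G.meanExit x R) := by ring

lemma condVC (h : G.condSPMV) : G.condVC :=
  G.condVC_of_condVD (fun y _ hR => h.summable_mu_ball y hR) h.condVD

lemma condTC (h : G.condSPMV) : G.condTC := by
  obtain ⟨A, hA, hmaster⟩ := h.exists_vol_mul_meanExit_le
  obtain ⟨D, hD, hTD⟩ := h.condTD
  refine ⟨A * D + 1, lt_add_of_pos_left 1 (mul_pos hA hD), fun x R hR y hy => ?_⟩
  have hxy : G.dist x y < R := hy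
  have hfar : G.meanExit x (2 * (2 * R)) ≤ A * G.meanExit y (2 * R) := by
    refine le_of_mul_le_mul_left ?_ (h.vol_pos x (R := 2 * (2 * R)) (by omega))
    calc G.vol x (2 * (2 * R)) * G.meanExit x (2 * (2 * R))
        ≤ A * (G.vol y (2 * R) * G.meanExit y (2 * R)) :=
          hmaster y (2 * R) (by omega) x (show G.dist y x < 2 * R by rw [G.dist_comm]; omega)
      _ ≤ A * (G.vol x (2 * (2 * R)) * G.meanExit y (2 * R)) := by
          gcongr
          exacts [G.meanExit_nonneg y _, G.muSet_mono (G.ball_subset_ball (by omega))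
            (h.summable_mu_ball x (by omega))]
      _ = G.vol x (2 * (2 * R)) * (A * G.meanExit y (2 * R)) := by ring
  calc G.meanExit x (2 * R) ≤ G.meanExit x (2 * (2 * R)) := h.meanExit_le_two_mul x _
    _ ≤ A * G.meanExit y (2 * R) := hfar
    _ ≤ A * (D * G.meanExit y R) := by gcongr; exact hTD y R hR
    _ ≤ (A * D + 1) * G.meanExit y R := by nlinarith [G.meanExit_nonneg y R]

lemma condMV (h : G.condSPMV) : G.condMV := by
  obtain ⟨C, hC, hmv⟩ := h.exists_le_of_isHarmonicOn
  refine ⟨2 * C, by linarith, fun x R hR u hu hharm => ?_⟩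
  have hu' : ∀ z ∈ G.ball x R, 0 ≤ u z := fun z hz => hu z (G.ball_subset_cball hz)
  have hux := hmv x R hR x (G.mem_ball_self hR) u hu' hharm
  have hsum : 0 ≤ ∑' z : G.ball x R, u z * G.mu z :=
    tsum_nonneg fun z => mul_nonneg (hu' z z.2) (G.mu_nonneg z)
  have hE : G.meanExit x R + 1 ≤ 2 * G.meanExit x (2 * R) := by
    linarith [h.meanExit_le_two_mul x R, h.one_le_meanExit x (R := 2 * R) (by omega)]
  have hVE := h.vol_mul_meanExit_pos (y := x) hR
  calc u x ≤ C * (G.meanExit x R + 1) / (G.vol x (2 * R) * G.meanExit x (2 * R)) *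
        ∑' z : G.ball x R, u z * G.mu z := hux
    _ ≤ C * (2 * G.meanExit x (2 * R)) / (G.vol x (2 * R) * G.meanExit x (2 * R)) *
        ∑' z : G.ball x R, u z * G.mu z := by gcongr
    _ = 2 * C / G.vol x (2 * R) * ∑' z : G.ball x R, u z * G.mu z := by
        field_simp [(h.meanExit_pos x (R := 2 * R) (by omega)).ne']
    _ ≤ 2 * C / G.vol x R * ∑' z : G.ball x R, u z * G.mu z := by
        gcongr
        exacts [h.vol_pos x hR, h.vol_le_two_mul x R]

end condSPMV

end WeightedGraph

open WeightedGraph in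
theorem vc_tc_mv_of_spmv_general {V : Type*} (G : WeightedGraph V)
    (hspmv : G.condSPMV) :
    G.condVC ∧ G.condTC ∧ G.condMV :=
  ⟨hspmv.condVC, hspmv.condTC, hspmv.condMV⟩

open WeightedGraph in
/-- Under `(p₀)`, the skewed parabolic mean value inequality implies `(VC)`, `(TC)`
and the mean value inequality `(MV)`. -/
theorem vc_tc_mv_of_spmv {V : Type*} [Countable V] [Infinite V] (G : WeightedGraph V)
    (hp0 : G.condP0) (hspmv : G.condSPMV) :
    G.condVC ∧ G.condTC ∧ G.condMV :=
  vc_tc_mv_of_spmv_general G hspmv
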